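/- There exists a constant C₁ > 0, depending only on λ₁, λ₂, C⋆, λ and min U (but not on d), such that for all x, y ∈ ℝ^d: 2V_λ(x,y)·(−1/2)(⟨x, ∇U(x)⟩ + |y|² + λ⟨x,y⟩ − d) + (1/4)|x + 2y|² ≤ −(λ_*/2)·V_λ(x,y)² + C₁(1 + d²). (The left-hand side equals the kinetic Langevin generator applied to V_λ², namely ⟨∇_x(V_λ²), y⟩ − ⟨∇_y(V_λ²), ∇U(x)+y⟩ + (1/2)Δ_y(V_λ²).) -/

import Mathlib

open scoped RealInnerProductSpace
open Real Set

/-!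
Write `V = 1 + (U - min U) + Q/4`. Every comparison of quadratic forms in `(x, y)` needed here
reduces, through Cauchy–Schwarz, to `0 ≤ a|x|² + b|y|² + c⟨x,y⟩` whenever `c² ≤ 4ab`. In this way
`Q` is comparable to `|x|² + |y|²`, and `κ Q ≤ λ₁|x|² + |y|² + λ⟨x,y⟩`; combined with the
dissipativity of `∇U` this gives the drift bound `λ_* V ≤ ⟨x,∇U⟩ + |y|² + λ⟨x,y⟩ + K₀`.
Multiplying by `V ≥ 1` turns the generator into `-λ_* V²` plus a term `(K + d) V`, and Young's
inequality absorbs the latter into `(λ_*/2) V²` at the price of `(K² + 1)(1 + d²)/λ_*`.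
-/

/-- `κ := min( (4λ₁−λ²)/(8(7/4−λ)), 3(4λ₁−λ²)/(10(λ²+4λ₁)) )`. -/
noncomputable def kappaConst (lam1 lam : ℝ) : ℝ :=
  min ((4 * lam1 - lam ^ 2) / (8 * (7/4 - lam)))
    (3 * (4 * lam1 - lam ^ 2) / (10 * (lam ^ 2 + 4 * lam1)))

/-- `λ_* := min(4κ, λ₂)`. -/
noncomputable def lamStarConst (lam1 lam2 lam : ℝ) : ℝ :=
  min (4 * kappaConst lam1 lam) lam2

/-- `V_λ(x,y) := 1 + U(x) − m + (1/4)(|x+y|² + |y|² − λ|x|²)`, where `m = min U`. -/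
noncomputable def Vlam {d : ℕ} (U : EuclideanSpace ℝ (Fin d) → ℝ) (m lam : ℝ)
    (x y : EuclideanSpace ℝ (Fin d)) : ℝ :=
  1 + U x - m + (1/4) * (‖x + y‖ ^ 2 + ‖y‖ ^ 2 - lam * ‖x‖ ^ 2)

section InnerProduct

variable {E : Type*} [NormedAddCommGroup E] [InnerProductSpace ℝ E]

theorem quadratic_form_nonneg (x y : E) {a b c : ℝ} (ha : 0 ≤ a) (hb : 0 ≤ b)
    (hc : c ^ 2 ≤ 4 * a * b) : 0 ≤ a * ‖x‖ ^ 2 + b * ‖y‖ ^ 2 + c * ⟪x, y⟫ := by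
  have hCS : ⟪x, y⟫ ^ 2 ≤ ‖x‖ ^ 2 * ‖y‖ ^ 2 := by
    simpa only [sq_abs, mul_pow] using
      pow_le_pow_left₀ (abs_nonneg _) (abs_real_inner_le_norm x y) 2
  have hsum : 0 ≤ a * ‖x‖ ^ 2 + b * ‖y‖ ^ 2 := by positivity
  nlinarith [sq_nonneg (a * ‖x‖ ^ 2 - b * ‖y‖ ^ 2),
    mul_le_mul_of_nonneg_right hc (by positivity : (0 : ℝ) ≤ ‖x‖ ^ 2 * ‖y‖ ^ 2),
    mul_le_mul_of_nonneg_left hCS (sq_nonneg c)]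

theorem norm_add_two_smul_sq_le (x y : E) :
    ‖x + (2 : ℝ) • y‖ ^ 2 ≤ 2 * ‖x‖ ^ 2 + 8 * ‖y‖ ^ 2 := by
  have h := quadratic_form_nonneg x y (a := 1) (b := 4) (c := -4) zero_le_one (by norm_num)
    (by norm_num)
  rw [norm_add_sq_real, real_inner_smul_right, norm_smul, Real.norm_two]
  linarith

theorem norm_sq_add_norm_sq_le_of_le_quarter (x y : E) {lam : ℝ} (hlam : lam ≤ 1 / 4) :
    ‖x‖ ^ 2 + ‖y‖ ^ 2 ≤ 28 * (‖x + y‖ ^ 2 + ‖y‖ ^ 2 - lam * ‖x‖ ^ 2) := by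
  have h := quadratic_form_nonneg x y (a := 5 / 7) (b := 7 / 5) (c := 2) (by norm_num)
    (by norm_num) (by norm_num)
  have hx : lam * ‖x‖ ^ 2 ≤ 1 / 4 * ‖x‖ ^ 2 := by gcongr
  rw [norm_add_sq_real]
  linarith [sq_nonneg ‖y‖]

theorem kappaConst_pos {lam1 lam : ℝ} (hlam0 : 0 < lam) (hlam : lam < 7 / 4)
    (hlam_sq : lam ^ 2 < 4 * lam1) : 0 < kappaConst lam1 lam :=
  lt_min (div_pos (by linarith) (by linarith))
    (div_pos (by linarith) (by linarith [pow_pos hlam0 2]))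

theorem lamStarConst_pos {lam1 lam2 lam : ℝ} (hlam2 : 0 < lam2) (hlam0 : 0 < lam)
    (hlam : lam < 7 / 4) (hlam_sq : lam ^ 2 < 4 * lam1) : 0 < lamStarConst lam1 lam2 lam :=
  lt_min (by linarith [kappaConst_pos hlam0 hlam hlam_sq]) hlam2

theorem kappaConst_mul_le (x y : E) {lam1 lam : ℝ} (hlam0 : 0 < lam) (hlam : lam < 7 / 4)
    (hlam_sq : lam ^ 2 < 4 * lam1) :
    kappaConst lam1 lam * (‖x + y‖ ^ 2 + ‖y‖ ^ 2 - lam * ‖x‖ ^ 2)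
      ≤ lam1 * ‖x‖ ^ 2 + ‖y‖ ^ 2 + lam * ⟪x, y⟫ := by
  set κ := kappaConst lam1 lam
  have hD : 0 < lam ^ 2 + 4 * lam1 := by linarith [pow_pos hlam0 2]
  have hκ : 0 ≤ κ := (kappaConst_pos hlam0 hlam hlam_sq).le
  have hκx : κ * (7 / 4 - lam) ≤ (4 * lam1 - lam ^ 2) / 8 := by
    have h : κ * (8 * (7 / 4 - lam)) ≤ 4 * lam1 - lam ^ 2 :=
      (le_div_iff₀ (by linarith)).1 (min_le_left _ _)
    linarith
  have hκy : κ * (10 / 3) ≤ (4 * lam1 - lam ^ 2) / (lam ^ 2 + 4 * lam1) := by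
    rw [le_div_iff₀ hD]
    have h : κ * (10 * (lam ^ 2 + 4 * lam1)) ≤ 3 * (4 * lam1 - lam ^ 2) :=
      (le_div_iff₀ (by positivity)).1 (min_le_right _ _)
    linarith
  have hupper : ‖x + y‖ ^ 2 + ‖y‖ ^ 2 - lam * ‖x‖ ^ 2
      ≤ (7 / 4 - lam) * ‖x‖ ^ 2 + 10 / 3 * ‖y‖ ^ 2 := by
    have h := quadratic_form_nonneg x y (a := 3 / 4) (b := 4 / 3) (c := -2) (by norm_num)
      (by norm_num) (by norm_num)
    rw [norm_add_sq_real]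
    linarith
  -- The two bounds on `κ` leave this form, whose discriminant vanishes exactly.
  have hcross := quadratic_form_nonneg x y (a := (lam ^ 2 + 4 * lam1) / 8)
    (b := 2 * lam ^ 2 / (lam ^ 2 + 4 * lam1)) (c := lam) (by linarith)
    (div_nonneg (by positivity) hD.le)
    (le_of_eq (by field_simp; ring))
  have hcoeff : (4 * lam1 - lam ^ 2) / (lam ^ 2 + 4 * lam1)
      = 1 - 2 * lam ^ 2 / (lam ^ 2 + 4 * lam1) := by
    field_simp
    ring
  calc κ * (‖x + y‖ ^ 2 + ‖y‖ ^ 2 - lam * ‖x‖ ^ 2)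
      ≤ κ * ((7 / 4 - lam) * ‖x‖ ^ 2 + 10 / 3 * ‖y‖ ^ 2) := by gcongr
    _ = κ * (7 / 4 - lam) * ‖x‖ ^ 2 + κ * (10 / 3) * ‖y‖ ^ 2 := by ring
    _ ≤ (4 * lam1 - lam ^ 2) / 8 * ‖x‖ ^ 2
          + (4 * lam1 - lam ^ 2) / (lam ^ 2 + 4 * lam1) * ‖y‖ ^ 2 := by gcongr
    _ ≤ lam1 * ‖x‖ ^ 2 + ‖y‖ ^ 2 + lam * ⟪x, y⟫ := by rw [hcoeff]; linarith

end InnerProduct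

section Lyapunov

variable {d : ℕ} {U : EuclideanSpace ℝ (Fin d) → ℝ} {m lam : ℝ}

theorem one_add_norm_sq_le_Vlam (x y : EuclideanSpace ℝ (Fin d)) (hmx : m ≤ U x)
    (hlam : lam ≤ 1 / 4) : 1 + (‖x‖ ^ 2 + ‖y‖ ^ 2) / 112 ≤ Vlam U m lam x y := by
  have h := norm_sq_add_norm_sq_le_of_le_quarter x y hlam
  rw [Vlam]
  linarith

theorem lamStarConst_mul_Vlam_le {lam1 lam2 Cst : ℝ} (x y g : EuclideanSpace ℝ (Fin d))
    (hlam0 : 0 < lam) (hlam : lam ≤ 1 / 4) (hlam_sq : lam ^ 2 < 4 * lam1)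
    (hmx : m ≤ U x) (hg : lam1 * ‖x‖ ^ 2 + lam2 * U x - Cst ≤ ⟪x, g⟫) :
    lamStarConst lam1 lam2 lam * Vlam U m lam x y
      ≤ ⟪x, g⟫ + ‖y‖ ^ 2 + lam * ⟪x, y⟫ + (lamStarConst lam1 lam2 lam + Cst - lam2 * m) := by
  set ls := lamStarConst lam1 lam2 lam
  set Q := ‖x + y‖ ^ 2 + ‖y‖ ^ 2 - lam * ‖x‖ ^ 2
  have hQ : 0 ≤ Q := by
    linarith [norm_sq_add_norm_sq_le_of_le_quarter x y hlam, sq_nonneg ‖x‖, sq_nonneg ‖y‖]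
  have hκ := kappaConst_mul_le x y hlam0 (by linarith) hlam_sq
  have hlsQ : ls * Q ≤ 4 * kappaConst lam1 lam * Q :=
    mul_le_mul_of_nonneg_right (min_le_left _ _) hQ
  have hlsU : ls * (U x - m) ≤ lam2 * (U x - m) :=
    mul_le_mul_of_nonneg_right (min_le_right _ _) (by linarith)
  rw [Vlam]
  linarith

end Lyapunov

theorem mul_le_half_mul_sq_add_mul {ls : ℝ} (hls : 0 < ls) (K t V : ℝ) :
    (K + t) * V ≤ ls / 2 * V ^ 2 + (K ^ 2 + 1) / ls * (1 + t ^ 2) := by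
  refine le_of_mul_le_mul_left ?_ hls
  rw [mul_add, ← mul_assoc ls ((K ^ 2 + 1) / ls), mul_div_cancel₀ _ hls.ne']
  nlinarith [sq_nonneg (ls * V - (K + t)), sq_nonneg (K - t), sq_nonneg (K * t)]

theorem stmt_19_general (lam1 lam2 Cst lam m : ℝ) (hlam2 : 0 < lam2)
    (hlam : lam ∈ Set.Ioo (0:ℝ) (min (2 * Real.sqrt lam1) (1/4))) :
    ∃ C₁ > (0:ℝ), ∀ d : ℕ, 1 ≤ d →
      ∀ U : EuclideanSpace ℝ (Fin d) → ℝ, ContDiff ℝ 1 U →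
        (∀ M : ℝ, ∃ R : ℝ, ∀ x, R ≤ ‖x‖ → M ≤ U x) →
        ∀ x₀ : EuclideanSpace ℝ (Fin d), (∀ x, U x₀ ≤ U x) → U x₀ = m →
        (∀ x, lam1 * ‖x‖ ^ 2 + lam2 * U x - Cst ≤ ⟪x, gradient U x⟫) →
        ∀ x y : EuclideanSpace ℝ (Fin d),
          2 * Vlam U m lam x y
              * (-(1/2) * (⟪x, gradient U x⟫ + ‖y‖ ^ 2 + lam * ⟪x, y⟫ - (d : ℝ)))
            + (1/4) * ‖x + (2:ℝ) • y‖ ^ 2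
          ≤ -(lamStarConst lam1 lam2 lam / 2) * (Vlam U m lam x y) ^ 2
            + C₁ * (1 + (d : ℝ) ^ 2) := by
  obtain ⟨hlam0, hlam_lt⟩ := hlam
  have hlam_quarter : lam ≤ 1 / 4 := (lt_of_lt_of_le hlam_lt (min_le_right _ _)).le
  have hlam_sq : lam ^ 2 < 4 * lam1 := by
    have h := (Real.lt_sqrt (by linarith)).1
      (by linarith [lt_of_lt_of_le hlam_lt (min_le_left _ _)] : lam / 2 < √lam1)
    linarith
  set ls := lamStarConst lam1 lam2 lam
  have hls : 0 < ls := lamStarConst_pos hlam2 hlam0 (by linarith) hlam_sq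
  set K := ls + Cst - lam2 * m + 224
  refine ⟨(K ^ 2 + 1) / ls, by positivity, fun d _ U _ _ x₀ hmin hUm hgrad x y => ?_⟩
  have hmx : m ≤ U x := hUm ▸ hmin x
  have hV := one_add_norm_sq_le_Vlam x y hmx hlam_quarter
  have hdrift := lamStarConst_mul_Vlam_le x y (gradient U x) hlam0 hlam_quarter hlam_sq hmx
    (hgrad x)
  set V := Vlam U m lam x y
  have hT : 1 / 4 * ‖x + (2 : ℝ) • y‖ ^ 2 ≤ 224 * V := by
    linarith [norm_add_two_smul_sq_le x y, sq_nonneg ‖x‖, sq_nonneg ‖y‖]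
  have hV0 : 0 ≤ V := by linarith [sq_nonneg ‖x‖, sq_nonneg ‖y‖]
  have hdriftV := mul_le_mul_of_nonneg_left hdrift hV0
  linarith [mul_le_half_mul_sq_add_mul hls K d V]

/-- The constant `C₁` depends only on `λ₁, λ₂, C⋆, λ` and `m = min U`, but not on the
dimension `d`: it is chosen before `d` and `U`. -/
theorem stmt_19 (lam1 lam2 Cst lam m : ℝ)
    (hlam1 : 0 < lam1) (hlam2 : 0 < lam2) (hCst : 0 < Cst)
    (hlam : lam ∈ Set.Ioo (0:ℝ) (min (2 * Real.sqrt lam1) (1/4))) :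
    ∃ C₁ > (0:ℝ), ∀ d : ℕ, 1 ≤ d →
      ∀ U : EuclideanSpace ℝ (Fin d) → ℝ, ContDiff ℝ 1 U →
        (∀ M : ℝ, ∃ R : ℝ, ∀ x, R ≤ ‖x‖ → M ≤ U x) →
        ∀ x₀ : EuclideanSpace ℝ (Fin d), (∀ x, U x₀ ≤ U x) → U x₀ = m →
        (∀ x, lam1 * ‖x‖ ^ 2 + lam2 * U x - Cst ≤ ⟪x, gradient U x⟫) →
        ∀ x y : EuclideanSpace ℝ (Fin d),
          2 * Vlam U m lam x y
              * (-(1/2) * (⟪x, gradient U x⟫ + ‖y‖ ^ 2 + lam * ⟪x, y⟫ - (d : ℝ)))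
            + (1/4) * ‖x + (2:ℝ) • y‖ ^ 2
          ≤ -(lamStarConst lam1 lam2 lam / 2) * (Vlam U m lam x y) ^ 2
            + C₁ * (1 + (d : ℝ) ^ 2) :=
  stmt_19_general lam1 lam2 Cst lam m hlam2 hlam
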